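/- Let (A, B, H) be a finite-dimensional P-module and suppose ξ ∈ H is a nonzero vector contained in an eventually periodic ray p = v·w^∞ where v is nonempty and chosen of minimal length (so p is not periodic). Then, in the sub-module K generated by ξ, the span of {pⱼξ : 0 ≤ j < |v|} contains no nonzero A,B-invariant subspace. -/

import Mathlib

open Filter Topology
open scoped InnerProductSpace

/-- Action of a finite binary word on a vector: digit `false` acts by `A`,
digit `true` by `B`, with the first digit acting first. -/
noncomputable def wordAct {H : Type*} [NormedAddCommGroup H] [InnerProductSpace ℂ H]
    (A B : H →L[ℂ] H) : List Bool → H → H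
  | [], ξ => ξ
  | b :: rest, ξ => wordAct A B rest ((if b then B else A) ξ)

/-- The length-`n` prefix of a ray `p : ℕ → Bool` as a list. -/
def pre (p : ℕ → Bool) (n : ℕ) : List Bool := List.ofFn fun i : Fin n => p i

/-- The Pythagorean equality `A*A + B*B = id`. -/
def IsPyth {H : Type*} [NormedAddCommGroup H] [InnerProductSpace ℂ H] [CompleteSpace H]
    (A B : H →L[ℂ] H) : Prop :=
  (ContinuousLinearMap.adjoint A).comp A + (ContinuousLinearMap.adjoint B).comp B =
    ContinuousLinearMap.id ℂ H

/-- `ξ` is a nonzero vector contained in the ray `p`. -/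
noncomputable def ContainedIn {H : Type*} [NormedAddCommGroup H] [InnerProductSpace ℂ H]
    (A B : H →L[ℂ] H) (p : ℕ → Bool) (ξ : H) : Prop :=
  ξ ≠ 0 ∧ ∀ n : ℕ, ‖wordAct A B (pre p n) ξ‖ = ‖ξ‖

/-- The ray `v · w^∞` built from a finite prefix `v` and a repeating word `w`. -/
def rayVW (v w : List Bool) : ℕ → Bool := fun n =>
  if n < v.length then v.getD n false else w.getD ((n - v.length) % w.length) false

section Helpers

variable {H : Type*} [NormedAddCommGroup H] [InnerProductSpace ℂ H]

/-- The operator of a single letter. -/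
noncomputable def letterOp (A B : H →L[ℂ] H) (b : Bool) : H →L[ℂ] H := if b then B else A

lemma wordAct_nil (A B : H →L[ℂ] H) (x : H) : wordAct A B [] x = x := rfl

lemma wordAct_cons (A B : H →L[ℂ] H) (b : Bool) (u : List Bool) (x : H) :
    wordAct A B (b :: u) x = wordAct A B u (letterOp A B b x) := rfl

lemma wordAct_append (A B : H →L[ℂ] H) (u u' : List Bool) (x : H) :
    wordAct A B (u ++ u') x = wordAct A B u' (wordAct A B u x) := by
  induction u generalizing x with
  | nil => rfl
  | cons b u ih => simp only [List.cons_append, wordAct_cons, ih]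

/-- Bundled version of `wordAct`. -/
noncomputable def wordActL (A B : H →L[ℂ] H) : List Bool → (H →L[ℂ] H)
  | [] => ContinuousLinearMap.id ℂ H
  | b :: r => (wordActL A B r).comp (letterOp A B b)

lemma wordAct_eq (A B : H →L[ℂ] H) (u : List Bool) (x : H) :
    wordAct A B u x = wordActL A B u x := by
  induction u generalizing x with
  | nil => rfl
  | cons b u ih => simp only [wordAct_cons, wordActL, ContinuousLinearMap.comp_apply, ih]

lemma pre_succ (p : ℕ → Bool) (n : ℕ) : pre p (n + 1) = pre p n ++ [p n] := by
  rw [pre, List.ofFn_succ']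
  simp [pre, List.concat_eq_append]

end Helpers
section Helpers2

variable {H : Type*} [NormedAddCommGroup H] [InnerProductSpace ℂ H] [CompleteSpace H]
variable (A B : H →L[ℂ] H)

lemma pyth_apply (hAB : IsPyth A B) (x : H) :
    ContinuousLinearMap.adjoint A (A x) + ContinuousLinearMap.adjoint B (B x) = x := by
  have := ContinuousLinearMap.ext_iff.mp hAB x
  simpa using this

lemma pyth_norm (hAB : IsPyth A B) (x : H) : ‖A x‖ ^ 2 + ‖B x‖ ^ 2 = ‖x‖ ^ 2 := by
  have h : (⟪A x, A x⟫_ℂ + ⟪B x, B x⟫_ℂ) = ⟪x, x⟫_ℂ := by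
    rw [← ContinuousLinearMap.adjoint_inner_left, ← ContinuousLinearMap.adjoint_inner_left,
      ← inner_add_left, pyth_apply A B hAB]
  have h2 := congrArg Complex.re h
  simpa [← RCLike.re_to_complex, inner_self_eq_norm_sq, -inner_self_eq_norm_sq_to_K] using h2

end Helpers2
section Helpers3

variable {H : Type*} [NormedAddCommGroup H] [InnerProductSpace ℂ H] [CompleteSpace H]

/-- The trajectory of `ξ` along the ray `p`. -/
noncomputable def xiV (A B : H →L[ℂ] H) (p : ℕ → Bool) (ξ : H) (n : ℕ) : H :=
  wordAct A B (pre p n) ξ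

variable (A B : H →L[ℂ] H) (p : ℕ → Bool) (ξ : H)

lemma xiV_succ (n : ℕ) :
    xiV A B p ξ (n + 1) = letterOp A B (p n) (xiV A B p ξ n) := by
  rw [xiV, pre_succ, wordAct_append]; rfl

variable (hAB : IsPyth A B) (hc2 : ∀ n, ‖xiV A B p ξ n‖ = ‖ξ‖)

include hAB hc2 in
lemma xiV_kill (n : ℕ) : letterOp A B (!(p n)) (xiV A B p ξ n) = 0 := by
  have h1 := pyth_norm A B hAB (xiV A B p ξ n)
  have h2 : ‖letterOp A B (p n) (xiV A B p ξ n)‖ = ‖xiV A B p ξ n‖ := by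
    rw [← xiV_succ, hc2, hc2]
  rw [← norm_eq_zero]
  cases hb : p n
  · rw [hb] at h2
    simp only [letterOp, Bool.not_false, Bool.false_eq_true, if_true, if_false] at h2 ⊢
    have h3 : ‖B (xiV A B p ξ n)‖ ^ 2 = 0 := by rw [h2] at h1; linarith
    exact pow_eq_zero_iff (two_ne_zero) |>.mp h3
  · rw [hb] at h2
    simp only [letterOp, Bool.not_true, Bool.false_eq_true, if_true, if_false] at h2 ⊢
    have h3 : ‖A (xiV A B p ξ n)‖ ^ 2 = 0 := by rw [h2] at h1; linarith
    exact pow_eq_zero_iff (two_ne_zero) |>.mp h3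

include hAB hc2 in
lemma xiV_adj (n : ℕ) :
    ContinuousLinearMap.adjoint (letterOp A B (p n))
      (letterOp A B (p n) (xiV A B p ξ n)) = xiV A B p ξ n := by
  have h0 := pyth_apply A B hAB (xiV A B p ξ n)
  have hk := xiV_kill A B p ξ hAB hc2 n
  cases hb : p n
  · rw [hb] at hk
    simp only [letterOp, Bool.not_false, Bool.false_eq_true, if_true, if_false] at hk ⊢
    rw [hk, map_zero, add_zero] at h0
    exact h0
  · rw [hb] at hk
    simp only [letterOp, Bool.not_true, Bool.false_eq_true, if_true, if_false] at hk ⊢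
    rw [hk, map_zero, zero_add] at h0
    exact h0

include hAB hc2 in
lemma xiV_inner_step (n : ℕ) (η : H) :
    ⟪xiV A B p ξ n, η⟫_ℂ = ⟪xiV A B p ξ (n + 1), letterOp A B (p n) η⟫_ℂ := by
  rw [xiV_succ, ← ContinuousLinearMap.adjoint_inner_left,
    xiV_adj A B p ξ hAB hc2 n]

include hAB hc2 in
lemma xiV_orth_aux : ∀ (d i k : ℕ), p (i + d) ≠ p (k + d) → (∀ t < d, p (i + t) = p (k + t)) →
    ⟪xiV A B p ξ i, xiV A B p ξ k⟫_ℂ = 0 := by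
  intro d
  induction d with
  | zero =>
    intro i k hne _
    simp only [Nat.add_zero] at hne
    have hb : p i = !(p k) := by revert hne; cases p i <;> cases p k <;> simp
    rw [xiV_inner_step A B p ξ hAB hc2 i, hb, xiV_kill A B p ξ hAB hc2 k,
      inner_zero_right]
  | succ d ih =>
    intro i k hne hlt
    have h0 : p i = p k := by
      have := hlt 0 (Nat.succ_pos d); simpa using this
    rw [xiV_inner_step A B p ξ hAB hc2 i (xiV A B p ξ k), h0, ← xiV_succ]
    apply ih (i + 1) (k + 1)
    · have e1 : i + 1 + d = i + (d + 1) := by omega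
      have e2 : k + 1 + d = k + (d + 1) := by omega
      rw [e1, e2]; exact hne
    · intro t ht
      have e1 : i + 1 + t = i + (t + 1) := by omega
      have e2 : k + 1 + t = k + (t + 1) := by omega
      rw [e1, e2]; exact hlt (t + 1) (by omega)

include hAB hc2 in
lemma xiV_orth (i k : ℕ) (h : ∃ d, p (i + d) ≠ p (k + d)) :
    ⟪xiV A B p ξ i, xiV A B p ξ k⟫_ℂ = 0 := by
  classical
  exact xiV_orth_aux A B p ξ hAB hc2 (Nat.find h) i k (Nat.find_spec h)
    (fun t ht => not_not.mp (Nat.find_min h ht))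

end Helpers3
/-- The length-`n` segment of the ray `p` starting at position `j`. -/
def segW (p : ℕ → Bool) (j n : ℕ) : List Bool := List.ofFn fun t : Fin n => p (j + t)

lemma segW_succ (p : ℕ → Bool) (j n : ℕ) :
    segW p j (n + 1) = segW p j n ++ [p (j + n)] := by
  rw [segW, List.ofFn_succ']
  simp [segW, List.concat_eq_append]

section Helpers4

variable {H : Type*} [NormedAddCommGroup H] [InnerProductSpace ℂ H] [CompleteSpace H]
variable (A B : H →L[ℂ] H) (p : ℕ → Bool) (ξ : H)

lemma act_match (j : ℕ) : ∀ n : ℕ,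
    wordAct A B (segW p j n) (xiV A B p ξ j) = xiV A B p ξ (j + n) := by
  intro n
  induction n with
  | zero => simp [segW, wordAct]
  | succ n ih =>
    rw [segW_succ, wordAct_append, ih]
    rw [wordAct_cons, wordAct_nil, ← xiV_succ, Nat.add_assoc]

variable (hAB : IsPyth A B) (hc2 : ∀ n, ‖xiV A B p ξ n‖ = ‖ξ‖)

include hAB hc2 in
lemma act_cases (j j' : ℕ) : ∀ n : ℕ,
    ((∀ t < n, p (j + t) = p (j' + t)) ∧
      wordAct A B (segW p j n) (xiV A B p ξ j') = xiV A B p ξ (j' + n)) ∨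
    wordAct A B (segW p j n) (xiV A B p ξ j') = 0 := by
  intro n
  induction n with
  | zero => left; exact ⟨fun t ht => absurd ht (by omega), by simp [segW, wordAct]⟩
  | succ n ih =>
    rw [segW_succ, wordAct_append]
    rcases ih with ⟨hall, heq⟩ | h0
    · rw [heq, wordAct_cons, wordAct_nil]
      by_cases hb : p (j + n) = p (j' + n)
      · left
        constructor
        · intro t ht
          rcases Nat.lt_succ_iff_lt_or_eq.mp ht with h | h
          · exact hall t h
          · subst h; exact hb
        · rw [hb, ← xiV_succ, Nat.add_assoc]
      · right
        have hb' : p (j + n) = !(p (j' + n)) := by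
          revert hb; cases p (j + n) <;> cases p (j' + n) <;> simp
        rw [hb', xiV_kill A B p ξ hAB hc2]
    · rw [h0, wordAct_cons, wordAct_nil, map_zero]
      right; rfl

include hAB hc2 in
lemma act_kill (j j' n : ℕ) (h : ∃ t < n, p (j + t) ≠ p (j' + t)) :
    wordAct A B (segW p j n) (xiV A B p ξ j') = 0 := by
  rcases act_cases A B p ξ hAB hc2 j j' n with ⟨hall, _⟩ | h0
  · obtain ⟨t, ht, hne⟩ := h
    exact absurd (hall t ht) hne
  · exact h0

end Helpers4
lemma period_mod (p : ℕ → Bool) (i k : ℕ) (hik : i < k)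
    (hper : ∀ d, p (i + d) = p (k + d)) :
    ∀ n, i ≤ n → p n = p (i + (n - i) % (k - i)) := by
  intro n
  induction n using Nat.strong_induction_on with
  | _ n ih =>
    intro hin
    by_cases h : n < k
    · have hm : (n - i) % (k - i) = n - i := Nat.mod_eq_of_lt (by omega)
      rw [hm]
      congr 1
      omega
    · have h1 : p (n - (k - i)) = p n := by
        have h2 := hper (n - k)
        have e1 : i + (n - k) = n - (k - i) := by omega
        have e2 : k + (n - k) = n := by omega
        rw [e1, e2] at h2
        exact h2
      have h3 := ih (n - (k - i)) (by omega) (by omega)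
      have e3 : (n - (k - i) - i) % (k - i) = (n - i) % (k - i) := by
        have e4 : n - (k - i) - i = n - i - (k - i) := by omega
        rw [e4]
        exact (Nat.mod_eq_sub_mod (by omega)).symm
      rw [← h1, h3, e3]

lemma shifts_ne (v w : List Bool) (hw : w ≠ [])
    (hmin : ∀ v' w' : List Bool, w' ≠ [] → rayVW v' w' = rayVW v w →
      v.length ≤ v'.length)
    (i k : ℕ) (him : i < v.length) (hik : i < k) :
    ∃ d, rayVW v w (i + d) ≠ rayVW v w (k + d) := by
  by_contra hcon
  push_neg at hcon
  set p := rayVW v w with hp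
  set v' := List.ofFn (fun t : Fin i => p t) with hv'
  set w' := List.ofFn (fun t : Fin (k - i) => p (i + t)) with hw'
  have hlv : v'.length = i := by simp [hv']
  have hlw : w'.length = k - i := by simp [hw']
  have hwne : w' ≠ [] := by
    intro h
    rw [h] at hlw
    simp at hlw
    omega
  have heq : rayVW v' w' = rayVW v w := by
    funext n
    show (if n < v'.length then v'.getD n false
        else w'.getD ((n - v'.length) % w'.length) false) = p n
    rw [hlv, hlw]
    by_cases hni : n < i
    · rw [if_pos hni]
      rw [List.getD_eq_getElem _ _ (by rw [hlv]; exact hni)]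
      simp [hv']
    · rw [if_neg hni]
      have hm : (n - i) % (k - i) < k - i := Nat.mod_lt _ (by omega)
      rw [List.getD_eq_getElem _ _ (by rw [hlw]; exact hm)]
      have : w'[(n - i) % (k - i)]'(by rw [hlw]; exact hm) = p (i + (n - i) % (k - i)) := by
        simp [hw']
      rw [this]
      exact (period_mod p i k hik hcon n (by omega)).symm
  have := hmin v' w' hwne heq
  omega

theorem stmt16 {H : Type*} [NormedAddCommGroup H] [InnerProductSpace ℂ H]
    [FiniteDimensional ℂ H] (A B : H →L[ℂ] H) (hAB : IsPyth A B)
    (ξ : H) (v w : List Bool) (hw : w ≠ []) (hv : v ≠ [])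
    (hcont : ContainedIn A B (rayVW v w) ξ)
    (hmin : ∀ v' w' : List Bool, w' ≠ [] → rayVW v' w' = rayVW v w →
      v.length ≤ v'.length) :
    ∀ S : Submodule ℂ H,
      S ≤ Submodule.span ℂ
        {η : H | ∃ j < v.length, η = wordAct A B (pre (rayVW v w) j) ξ} →
      (∀ x ∈ S, A x ∈ S ∧ B x ∈ S) → S = ⊥ := by
  classical
  intro S hSle hSinv
  set p := rayVW v w with hp
  set m := v.length with hm
  have hm0 : 0 < m := List.length_pos_iff.mpr hv
  have hc2 : ∀ n, ‖xiV A B p ξ n‖ = ‖ξ‖ := hcont.2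
  have hξ : ξ ≠ 0 := hcont.1
  have hset : {η : H | ∃ j < m, η = wordAct A B (pre p j) ξ}
      = Set.range (fun j : Fin m => xiV A B p ξ (j : ℕ)) := by
    ext η
    simp only [Set.mem_setOf_eq, Set.mem_range]
    constructor
    · rintro ⟨j, hj, rfl⟩; exact ⟨⟨j, hj⟩, rfl⟩
    · rintro ⟨j, rfl⟩; exact ⟨j, j.isLt, rfl⟩
  rw [hset] at hSle
  have hinv : ∀ (u : List Bool) (x : H), x ∈ S → wordAct A B u x ∈ S := by
    intro u
    induction u with
    | nil => intro x hx; exact hx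
    | cons b u ih =>
      intro x hx
      rw [wordAct_cons]
      apply ih
      cases b
      · simpa [letterOp] using (hSinv x hx).1
      · simpa [letterOp] using (hSinv x hx).2
  rw [Submodule.eq_bot_iff]
  intro x hx
  obtain ⟨c, hc⟩ := (Submodule.mem_span_range_iff_exists_fun ℂ).mp (hSle hx)
  have key : ∀ j : Fin m, c j = 0 := by
    intro j
    have hdiff : ∀ j' : Fin m, j' ≠ j → ∃ t, p ((j : ℕ) + t) ≠ p ((j' : ℕ) + t) := by
      intro j' hne
      rcases Nat.lt_or_ge (j : ℕ) (j' : ℕ) with h | h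
      · obtain ⟨d, hd⟩ := shifts_ne v w hw hmin (j : ℕ) (j' : ℕ) j.isLt h
        exact ⟨d, hd⟩
      · have hlt : (j' : ℕ) < (j : ℕ) := lt_of_le_of_ne h (fun he => hne (Fin.ext he))
        obtain ⟨d, hd⟩ := shifts_ne v w hw hmin (j' : ℕ) (j : ℕ) j'.isLt hlt
        exact ⟨d, Ne.symm hd⟩
    have hex : ∃ n : ℕ, m ≤ n ∧ ∀ (j' : Fin m) (h : j' ≠ j), Nat.find (hdiff j' h) < n := by
      refine ⟨m + (∑ j'' : Fin m, if h' : j'' ≠ j then Nat.find (hdiff j'' h') else 0) + 1,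
        by omega, ?_⟩
      intro j' h
      have h1 := Finset.single_le_sum
        (f := fun j'' : Fin m => if h' : j'' ≠ j then Nat.find (hdiff j'' h') else 0)
        (fun _ _ => Nat.zero_le _) (Finset.mem_univ j')
      simp only [dif_pos h] at h1
      omega
    obtain ⟨n, hnm, hfind⟩ := hex
    have hact : wordAct A B (segW p (j : ℕ) n) x = c j • xiV A B p ξ ((j : ℕ) + n) := by
      rw [← hc, wordAct_eq, map_sum]
      have hsum : (∑ j' : Fin m, wordActL A B (segW p (j : ℕ) n) (c j' • xiV A B p ξ (j' : ℕ)))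
          = wordActL A B (segW p (j : ℕ) n) (c j • xiV A B p ξ (j : ℕ)) := by
        apply Finset.sum_eq_single
        · intro j' _ hne
          rw [map_smul, ← wordAct_eq,
            act_kill A B p ξ hAB hc2 (j : ℕ) (j' : ℕ) n
              ⟨Nat.find (hdiff j' hne), hfind j' hne, Nat.find_spec (hdiff j' hne)⟩,
            smul_zero]
        · intro hj; exact absurd (Finset.mem_univ j) hj
      rw [hsum, map_smul, ← wordAct_eq, act_match]
    have hmem : c j • xiV A B p ξ ((j : ℕ) + n) ∈ S := by
      rw [← hact]; exact hinv _ x hx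
    set y := c j • xiV A B p ξ ((j : ℕ) + n) with hy
    have horth : ∀ z ∈ Submodule.span ℂ (Set.range fun j : Fin m => xiV A B p ξ (j : ℕ)),
        ⟪z, y⟫_ℂ = 0 := by
      intro z hz
      induction hz using Submodule.span_induction with
      | mem z hzmem =>
        obtain ⟨i, rfl⟩ := hzmem
        rw [hy, inner_smul_right]
        have hiorth : ⟪xiV A B p ξ (i : ℕ), xiV A B p ξ ((j : ℕ) + n)⟫_ℂ = 0 := by
          apply xiV_orth A B p ξ hAB hc2
          apply shifts_ne v w hw hmin (i : ℕ) ((j : ℕ) + n) i.isLt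
          have := i.isLt
          omega
        rw [hiorth, mul_zero]
      | zero => exact inner_zero_left _
      | add a b _ _ ha hb => rw [inner_add_left, ha, hb, add_zero]
      | smul r a _ ha => rw [inner_smul_left, ha, mul_zero]
    have hy0 : y = 0 := inner_self_eq_zero.mp (horth y (hSle hmem))
    rcases smul_eq_zero.mp hy0 with h | h
    · exact h
    · exfalso
      apply hξ
      have h2 := hc2 ((j : ℕ) + n)
      rw [h, norm_zero] at h2
      exact norm_eq_zero.mp h2.symm
  rw [← hc]
  exact Finset.sum_eq_zero fun j _ => by rw [key j, zero_smul]
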